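/- Let Q*(x,y) = a*x² + b*xy + c*y² with a*, b*, c* integers, a* > 0, c* > 0, d = (b*)² − 4a*c* < 0, and let t, h, k, Δ₀ be positive reals, r a real number, m a positive integer, and n a real number. Define F_x(y) := (b*x + 2c*y)(r + √t/√(2π h k Δ₀ Q*(x,y))). Suppose x > 0 and y is a real number with b*x + 2c*y > 0 satisfying 2m F_x'(y) = n (where F_x'(y) = 2c*r + √t |d| x² / (2√(2π h k Δ₀) Q*(x,y)^{3/2})), so that in particular n − 4c*mr > 0. Then 2m F_x(y) − n y = (b*n/(2c*)) x + (1/(2c*)) (−(n − 4c*mr)^{2/3} |d|^{1/3} x^{2/3} + 4c* m^{2/3} t^{1/3} / (2π h k Δ₀)^{1/3})^{3/2}, the expression inside the 3/2-power being nonnegative. -/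

import Mathlib

open Real

set_option maxHeartbeats 1000000 in
/-- Computation of the phase 2m F_x(y) − n y at the stationary point. -/
theorem stationary_phase_computation
    (a' b' c' : ℤ) (ha' : 0 < a') (hc' : 0 < c') (hd : b' ^ 2 - 4 * a' * c' < 0)
    (t h k Δ₀ : ℝ) (ht : 0 < t) (hh : 0 < h) (hk : 0 < k) (hΔ₀ : 0 < Δ₀)
    (r : ℝ) (m : ℕ) (hm : 0 < m) (n x y : ℝ)
    (hx : 0 < x) (hy : 0 < (b' : ℝ) * x + 2 * (c' : ℝ) * y)
    (hsol : 2 * (m : ℝ) *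
        (2 * (c' : ℝ) * r +
          Real.sqrt t * |((b' ^ 2 - 4 * a' * c' : ℤ) : ℝ)| * x ^ 2 /
            (2 * Real.sqrt (2 * π * h * k * Δ₀) *
              ((a' : ℝ) * x ^ 2 + (b' : ℝ) * x * y + (c' : ℝ) * y ^ 2) ^ ((3 : ℝ) / 2))) = n) :
    0 < n - 4 * (c' : ℝ) * m * r ∧
    0 ≤ -((n - 4 * (c' : ℝ) * m * r) ^ ((2 : ℝ) / 3)) *
          |((b' ^ 2 - 4 * a' * c' : ℤ) : ℝ)| ^ ((1 : ℝ) / 3) * x ^ ((2 : ℝ) / 3) +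
        4 * (c' : ℝ) * (m : ℝ) ^ ((2 : ℝ) / 3) * t ^ ((1 : ℝ) / 3) /
          (2 * π * h * k * Δ₀) ^ ((1 : ℝ) / 3) ∧
    2 * (m : ℝ) *
        (((b' : ℝ) * x + 2 * (c' : ℝ) * y) *
          (r + Real.sqrt t /
            Real.sqrt (2 * π * h * k * Δ₀ *
              ((a' : ℝ) * x ^ 2 + (b' : ℝ) * x * y + (c' : ℝ) * y ^ 2)))) - n * y =
      (b' : ℝ) * n / (2 * (c' : ℝ)) * x +
        1 / (2 * (c' : ℝ)) *
          (-((n - 4 * (c' : ℝ) * m * r) ^ ((2 : ℝ) / 3)) *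
              |((b' ^ 2 - 4 * a' * c' : ℤ) : ℝ)| ^ ((1 : ℝ) / 3) * x ^ ((2 : ℝ) / 3) +
            4 * (c' : ℝ) * (m : ℝ) ^ ((2 : ℝ) / 3) * t ^ ((1 : ℝ) / 3) /
              (2 * π * h * k * Δ₀) ^ ((1 : ℝ) / 3)) ^ ((3 : ℝ) / 2) := by
  have hπ : (0:ℝ) < π := Real.pi_pos
  set P : ℝ := 2 * π * h * k * Δ₀ with hPdef
  have hP : 0 < P := by positivity
  set a : ℝ := (a' : ℝ) with hadef
  set b : ℝ := (b' : ℝ) with hbdef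
  set c : ℝ := (c' : ℝ) with hcdef
  have hcR : 0 < c := by rw [hcdef]; exact_mod_cast hc'
  have haR : 0 < a := by rw [hadef]; exact_mod_cast ha'
  have hDR : ((b' ^ 2 - 4 * a' * c' : ℤ) : ℝ) = b ^ 2 - 4 * a * c := by
    rw [hadef, hbdef, hcdef]; push_cast; ring
  have hdR : b ^ 2 - 4 * a * c < 0 := by
    rw [← hDR]; exact_mod_cast hd
  set D : ℝ := 4 * a * c - b ^ 2 with hDdef
  have hDpos : 0 < D := by rw [hDdef]; linarith
  have habs : |((b' ^ 2 - 4 * a' * c' : ℤ) : ℝ)| = D := by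
    rw [hDR, abs_of_neg hdR, hDdef]; ring
  rw [habs] at hsol ⊢
  set Q : ℝ := a * x ^ 2 + b * x * y + c * y ^ 2 with hQdef
  set S : ℝ := b * x + 2 * c * y with hSdef
  have h4cQ : 4 * c * Q = S ^ 2 + D * x ^ 2 := by rw [hQdef, hSdef, hDdef]; ring
  have hQpos : 0 < Q := by nlinarith [sq_nonneg S, mul_pos (mul_pos hDpos hx) hx]
  have hQ32 : (0:ℝ) < Q ^ ((3:ℝ)/2) := Real.rpow_pos_of_pos hQpos _
  have hst : 0 < Real.sqrt t := Real.sqrt_pos.mpr ht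
  have hsP : 0 < Real.sqrt P := Real.sqrt_pos.mpr hP
  have hsQ : 0 < Real.sqrt Q := Real.sqrt_pos.mpr hQpos
  have hmR : (0:ℝ) < (m:ℝ) := by exact_mod_cast hm
  set K : ℝ := (m:ℝ) * Real.sqrt t / Real.sqrt P with hKdef
  have hK : 0 < K := by positivity
  clear_value P a b c D Q S K
  have hν : n - 4 * c * (m:ℝ) * r = K * (D * x ^ 2) / Q ^ ((3:ℝ)/2) := by
    rw [← hsol, hKdef]
    field_simp
    ring
  have hνpos : 0 < n - 4 * c * (m:ℝ) * r := by
    rw [hν]; positivity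
  -- (I): ν^{2/3} * D^{1/3} * x^{2/3} = K^{2/3} * (D * x^2) / Q
  have hI : (n - 4 * c * (m:ℝ) * r) ^ ((2:ℝ)/3) * D ^ ((1:ℝ)/3) * x ^ ((2:ℝ)/3)
      = K ^ ((2:ℝ)/3) * (D * x ^ 2) / Q := by
    rw [hν, Real.div_rpow (by positivity) hQ32.le,
      Real.mul_rpow hK.le (by positivity), Real.mul_rpow hDpos.le (by positivity),
      ← Real.rpow_natCast x 2, ← Real.rpow_mul hx.le, ← Real.rpow_mul hQpos.le]
    have eQ : Q ^ ((3:ℝ)/2 * ((2:ℝ)/3)) = Q := by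
      norm_num
    have ex : x ^ (((2:ℕ):ℝ) * ((2:ℝ)/3)) * x ^ ((2:ℝ)/3) = x ^ (((2:ℕ)):ℝ) := by
      rw [← Real.rpow_add hx]; norm_num
    have eD : D ^ ((2:ℝ)/3) * D ^ ((1:ℝ)/3) = D := by
      rw [← Real.rpow_add hDpos]; norm_num
    rw [eQ]
    linear_combination (K ^ ((2:ℝ)/3) * D ^ ((2:ℝ)/3) * D ^ ((1:ℝ)/3) / Q) * ex
      + (K ^ ((2:ℝ)/3) * x ^ (((2:ℕ)):ℝ) / Q) * eD
  -- (II): m^{2/3} * t^{1/3} / P^{1/3} = K^{2/3}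
  have hII : (m:ℝ) ^ ((2:ℝ)/3) * t ^ ((1:ℝ)/3) / P ^ ((1:ℝ)/3) = K ^ ((2:ℝ)/3) := by
    rw [hKdef, Real.div_rpow (by positivity) hsP.le, Real.mul_rpow hmR.le hst.le,
      Real.sqrt_eq_rpow, Real.sqrt_eq_rpow, ← Real.rpow_mul ht.le, ← Real.rpow_mul hP.le]
    norm_num
  -- the bracket equals K^{2/3} S^2 / Q
  have hE : -((n - 4 * c * (m:ℝ) * r) ^ ((2:ℝ)/3)) * D ^ ((1:ℝ)/3) * x ^ ((2:ℝ)/3) +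
        4 * c * (m:ℝ) ^ ((2:ℝ)/3) * t ^ ((1:ℝ)/3) / P ^ ((1:ℝ)/3)
      = K ^ ((2:ℝ)/3) * S ^ 2 / Q := by
    have h1 : -((n - 4 * c * (m:ℝ) * r) ^ ((2:ℝ)/3)) * D ^ ((1:ℝ)/3) * x ^ ((2:ℝ)/3)
        = -(K ^ ((2:ℝ)/3) * (D * x ^ 2) / Q) := by rw [← hI]; ring
    have h2 : 4 * c * (m:ℝ) ^ ((2:ℝ)/3) * t ^ ((1:ℝ)/3) / P ^ ((1:ℝ)/3)
        = 4 * c * K ^ ((2:ℝ)/3) := by rw [← hII]; ring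
    have h3 : K ^ ((2:ℝ)/3) * (D * x ^ 2) / Q
        = 4 * c * K ^ ((2:ℝ)/3) - K ^ ((2:ℝ)/3) * S ^ 2 / Q := by
      rw [eq_sub_iff_add_eq, ← add_div, div_eq_iff (ne_of_gt hQpos)]
      linear_combination -(K ^ ((2:ℝ)/3)) * h4cQ
    rw [h1, h2, h3]
    ring
  refine ⟨hνpos, ?_, ?_⟩
  · rw [hE]; positivity
  · rw [hE]
    have hE32 : (K ^ ((2:ℝ)/3) * S ^ 2 / Q) ^ ((3:ℝ)/2) = K * S ^ 3 / Q ^ ((3:ℝ)/2) := by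
      rw [Real.div_rpow (by positivity) hQpos.le,
        Real.mul_rpow (by positivity) (sq_nonneg S)]
      have eK : (K ^ ((2:ℝ)/3)) ^ ((3:ℝ)/2) = K := by
        rw [← Real.rpow_mul hK.le]; norm_num
      have eS : ((S ^ 2 : ℝ)) ^ ((3:ℝ)/2) = S ^ 3 := by
        rw [← Real.rpow_natCast S 2, ← Real.rpow_mul hy.le,
          show ((2:ℕ):ℝ) * ((3:ℝ)/2) = ((3:ℕ):ℝ) by push_cast; ring,
          Real.rpow_natCast]
      rw [eK, eS]
    rw [hE32]
    have hQQ : Q ^ ((3:ℝ)/2) = Q * Real.sqrt Q := by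
      rw [Real.sqrt_eq_rpow, show ((3:ℝ)/2) = 1 + 1/2 by norm_num,
        Real.rpow_add hQpos, Real.rpow_one]
    have hsPQ : Real.sqrt (P * Q) = Real.sqrt P * Real.sqrt Q := Real.sqrt_mul hP.le Q
    have hn : n = 4 * c * (m:ℝ) * r + K * (D * x ^ 2) / (Q * Real.sqrt Q) := by
      rw [← hQQ]; linarith [hν]
    rw [hsPQ, hQQ]
    subst hn
    subst hKdef
    subst hSdef
    subst hDdef
    have hQne : a * x ^ 2 + b * x * y + c * y ^ 2 ≠ 0 := by rw [← hQdef]; positivity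
    subst hQdef
    have hcne : c ≠ 0 := ne_of_gt hcR
    have hsPne : Real.sqrt P ≠ 0 := ne_of_gt hsP
    have hsQne : Real.sqrt (a * x ^ 2 + b * x * y + c * y ^ 2) ≠ 0 := ne_of_gt hsQ
    clear hsol hν hνpos hI hII hE hE32 hQQ hsPQ h4cQ hQ32 hsQ hQpos habs hDR hdR
    generalize Real.sqrt (a * x ^ 2 + b * x * y + c * y ^ 2) = s at *
    generalize hq : a * x ^ 2 + b * x * y + c * y ^ 2 = q at *
    field_simp
    subst hq
    ring
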